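/- arXiv:1601.06885 — 10 statements merged into one kernel-verified Lean document; each statement's English description precedes it below -/
import Mathlib

section
/- For every binary vector x, the set of vectors obtainable by first applying at most one adjacent transposition and then deleting at most one symbol equals the set obtainable by first deleting at most one symbol and then applying at most one adjacent transposition: B_D(B_{T,1}(x)) = B_{T,1}(B_D(x)). -/
/-- The set of words obtained from `x` by deleting at most one symbol. -/
def delBall (x : List Bool) : Set (List Bool) :=
  insert x {y | ∃ i < x.length, y = x.eraseIdx i}

/-- The set of words obtained from `x` by at most one adjacent transposition. -/
def oneT (x : List Bool) : Set (List Bool) :=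
  insert x {y | ∃ (s t : List Bool) (a b : Bool),
    x = s ++ a :: b :: t ∧ y = s ++ b :: a :: t}

lemma mem_delBall {x y : List Bool} :
    y ∈ delBall x ↔ y = x ∨ ∃ i < x.length, y = x.eraseIdx i := by
  simp [delBall, Set.mem_insert_iff, Set.mem_setOf_eq]

lemma mem_oneT {x y : List Bool} :
    y ∈ oneT x ↔ y = x ∨ ∃ s t a b, x = s ++ a :: b :: t ∧ y = s ++ b :: a :: t := by
  simp [oneT, Set.mem_insert_iff, Set.mem_setOf_eq]

lemma split_app {u v s r : List Bool} (h : u ++ v = s ++ r) (hl : u.length ≤ s.length) :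
    ∃ m, s = u ++ m ∧ v = m ++ r := by
  rcases List.append_eq_append_iff.mp h with ⟨m, hm1, hm2⟩ | ⟨m, hm1, hm2⟩
  · exact ⟨m, hm1, hm2⟩
  · have hlen := congrArg List.length hm1
    simp at hlen
    have hm : m = [] := List.length_eq_zero_iff.mp (by omega)
    subst hm
    exact ⟨[], by simpa using hm1.symm, by simpa using hm2.symm⟩

lemma forward {x z y : List Bool} (hz : z ∈ oneT x) (hy : y ∈ delBall z) :
    ∃ w ∈ delBall x, y ∈ oneT w := by
  rcases mem_oneT.mp hz with rfl | ⟨s, t, a, b, rfl, rfl⟩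
  · exact ⟨y, hy, mem_oneT.mpr (Or.inl rfl)⟩
  rcases mem_delBall.mp hy with rfl | ⟨i, hi, rfl⟩
  · exact ⟨s ++ a :: b :: t, mem_delBall.mpr (Or.inl rfl),
      mem_oneT.mpr (Or.inr ⟨s, t, a, b, rfl, rfl⟩)⟩
  simp only [List.length_append, List.length_cons] at hi
  rcases lt_or_ge i s.length with h1 | h1
  · refine ⟨(s ++ a :: b :: t).eraseIdx i,
      mem_delBall.mpr (Or.inr ⟨i, by simp only [List.length_append, List.length_cons]; omega, rfl⟩),
      mem_oneT.mpr (Or.inr ⟨s.eraseIdx i, t, a, b, ?_, ?_⟩)⟩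
    · rw [List.eraseIdx_append_of_lt_length h1]
    · rw [List.eraseIdx_append_of_lt_length h1]
  · obtain ⟨k, rfl⟩ : ∃ k, i = s.length + k := ⟨i - s.length, by omega⟩
    rw [List.eraseIdx_append_of_length_le (by omega), Nat.add_sub_cancel_left]
    match k with
    | 0 =>
        refine ⟨s ++ a :: t,
          mem_delBall.mpr (Or.inr ⟨s.length + 1,
            by simp only [List.length_append, List.length_cons]; omega, ?_⟩),
          mem_oneT.mpr (Or.inl (by simp))⟩
        rw [List.eraseIdx_append_of_length_le (by omega), Nat.add_sub_cancel_left]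
        simp
    | 1 =>
        refine ⟨s ++ b :: t,
          mem_delBall.mpr (Or.inr ⟨s.length,
            by simp only [List.length_append, List.length_cons]; omega, ?_⟩),
          mem_oneT.mpr (Or.inl (by simp))⟩
        rw [List.eraseIdx_append_of_length_le (by omega), Nat.sub_self]
        simp
    | (j+2) =>
        refine ⟨s ++ a :: b :: t.eraseIdx j,
          mem_delBall.mpr (Or.inr ⟨s.length + (j + 2),
            by simp only [List.length_append, List.length_cons]; omega, ?_⟩),
          mem_oneT.mpr (Or.inr ⟨s, t.eraseIdx j, a, b, rfl, by simp⟩)⟩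
        rw [List.eraseIdx_append_of_length_le (by omega), Nat.add_sub_cancel_left]
        simp

lemma backward {x z y : List Bool} (hz : z ∈ delBall x) (hy : y ∈ oneT z) :
    ∃ w ∈ oneT x, y ∈ delBall w := by
  rcases mem_delBall.mp hz with rfl | ⟨i, hi, rfl⟩
  · exact ⟨y, hy, mem_delBall.mpr (Or.inl rfl)⟩
  rcases mem_oneT.mp hy with rfl | ⟨s, t, a, b, hz2, rfl⟩
  · exact ⟨x, mem_oneT.mpr (Or.inl rfl), mem_delBall.mpr (Or.inr ⟨i, hi, rfl⟩)⟩
  obtain ⟨p, c, d, hx, hplen⟩ : ∃ p c d, x = p ++ c :: d ∧ p.length = i :=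
    ⟨x.take i, x[i], x.drop (i + 1),
      by rw [← List.drop_eq_getElem_cons hi, List.take_append_drop],
      by simp [List.length_take]; omega⟩
  subst hx
  subst hplen
  rw [List.eraseIdx_append_of_length_le le_rfl, Nat.sub_self, List.eraseIdx_cons_zero] at hz2
  -- hz2 : p ++ d = s ++ a :: b :: t
  rcases le_or_gt p.length s.length with h1 | h1
  · -- deletion strictly before the pair
    obtain ⟨m, rfl, rfl⟩ := split_app hz2 h1
    refine ⟨p ++ c :: (m ++ b :: a :: t),
      mem_oneT.mpr (Or.inr ⟨p ++ c :: m, t, a, b, by simp, by simp⟩),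
      mem_delBall.mpr (Or.inr ⟨p.length,
        by simp only [List.length_append, List.length_cons]; omega, ?_⟩)⟩
    rw [List.eraseIdx_append_of_length_le le_rfl, Nat.sub_self, List.eraseIdx_cons_zero]
    simp
  · rcases le_or_gt p.length (s.length + 1) with h2 | h2
    · -- deletion between a and b : p = s ++ [a], d = b :: t
      have hp : p.length = s.length + 1 := by omega
      obtain ⟨rfl, rfl⟩ : p = s ++ [a] ∧ d = b :: t := by
        have := List.append_inj (hz2.trans (by simp : s ++ a :: b :: t = (s ++ [a]) ++ b :: t))
          (by simp [hp])
        exact ⟨this.1, this.2⟩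
      by_cases hab : a = b
      · subst hab
        refine ⟨(s ++ [a]) ++ c :: a :: t, mem_oneT.mpr (Or.inl rfl),
          mem_delBall.mpr (Or.inr ⟨(s ++ [a]).length,
            by simp only [List.length_append, List.length_cons]; omega, ?_⟩)⟩
        rw [List.eraseIdx_append_of_length_le le_rfl, Nat.sub_self, List.eraseIdx_cons_zero]
        simp
      · have hcab : c = a ∨ c = b := by
          cases c <;> cases a <;> cases b <;> simp_all
        rcases hcab with rfl | rfl
        · -- x = s ++ a :: a :: b :: t
          refine ⟨(s ++ [c]) ++ b :: c :: t,
            mem_oneT.mpr (Or.inr ⟨s ++ [c], t, c, b, by simp, by simp⟩),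
            mem_delBall.mpr (Or.inr ⟨s.length,
              by simp only [List.length_append, List.length_cons]; omega, ?_⟩)⟩
          have : (s ++ [c]) ++ b :: c :: t = s ++ c :: b :: c :: t := by simp
          rw [this, List.eraseIdx_append_of_length_le le_rfl, Nat.sub_self,
            List.eraseIdx_cons_zero]
        · -- x = s ++ a :: b :: b :: t
          refine ⟨s ++ c :: a :: c :: t,
            mem_oneT.mpr (Or.inr ⟨s, c :: t, a, c, by simp, by simp⟩),
            mem_delBall.mpr (Or.inr ⟨s.length + 2,
              by simp only [List.length_append, List.length_cons]; omega, ?_⟩)⟩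
          have : s ++ c :: a :: c :: t = (s ++ [c, a]) ++ c :: t := by simp
          rw [this, List.eraseIdx_append_of_length_le (by simp),
            (by simp : s.length + 2 - (s ++ [c, a]).length = 0), List.eraseIdx_cons_zero]
          simp
    · -- deletion strictly after the pair
      have hz2' : (s ++ [a, b]) ++ t = p ++ d := by simpa using hz2.symm
      obtain ⟨m, rfl, rfl⟩ := split_app hz2' (by simp; omega)
      refine ⟨s ++ b :: a :: (m ++ c :: d),
        mem_oneT.mpr (Or.inr ⟨s, m ++ c :: d, a, b, by simp, rfl⟩),
        mem_delBall.mpr (Or.inr ⟨(s ++ [a, b] ++ m).length,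
          by simp, ?_⟩)⟩
      have : s ++ b :: a :: (m ++ c :: d) = (s ++ [b, a] ++ m) ++ c :: d := by simp
      rw [this, List.eraseIdx_append_of_length_le (by simp),
        (by simp : (s ++ [a, b] ++ m).length - (s ++ [b, a] ++ m).length = 0),
        List.eraseIdx_cons_zero]
      simp

theorem del_trans_commute (x : List Bool) :
    (⋃ z ∈ oneT x, delBall z) = ⋃ z ∈ delBall x, oneT z := by
  ext y
  simp only [Set.mem_iUnion, exists_prop]
  constructor
  · rintro ⟨z, hz, hy⟩; exact forward hz hy
  · rintro ⟨z, hz, hy⟩; exact backward hz hy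
end

section
/- For every binary vector x and every ℓ ≥ 1, B_D(B_{T,ℓ}(x)) = B_{T,ℓ}(B_D(x)), where B_{T,ℓ} denotes the set of words obtainable by at most ℓ adjacent transpositions and B_D denotes the set obtainable by at most one deletion. -/
/-- The set of words obtained from `x` by at most `ℓ` adjacent transpositions. -/
def ballT : ℕ → List Bool → Set (List Bool)
  | 0, x => {x}
  | (ℓ + 1), x => ⋃ y ∈ ballT ℓ x, oneT y

lemma mem_delBall_iff {x y : List Bool} :
    y ∈ delBall x ↔ y = x ∨ ∃ s t, ∃ c : Bool, x = s ++ c :: t ∧ y = s ++ t := by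
  refine Set.mem_insert_iff.trans (or_congr_right ⟨?_, ?_⟩)
  · rintro ⟨i, hi, rfl⟩
    refine ⟨x.take i, x.drop (i + 1), x[i], ?_, List.eraseIdx_eq_take_drop_succ x i⟩
    rw [List.getElem_cons_drop, List.take_append_drop]
  · rintro ⟨s, t, c, rfl, rfl⟩
    exact ⟨s.length, by simp, by simp [List.eraseIdx_append_of_length_le]⟩

lemma self_mem_delBall (x : List Bool) : x ∈ delBall x := Set.mem_insert _ _

lemma append_mem_delBall (s t : List Bool) (c : Bool) : s ++ t ∈ delBall (s ++ c :: t) :=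
  mem_delBall_iff.mpr (Or.inr ⟨s, t, c, rfl, rfl⟩)

lemma self_mem_oneT (x : List Bool) : x ∈ oneT x := Set.mem_insert _ _

lemma swap_mem_oneT (s t : List Bool) (a b : Bool) :
    s ++ b :: a :: t ∈ oneT (s ++ a :: b :: t) :=
  Set.mem_insert_iff.mpr (Or.inr ⟨s, t, a, b, rfl, rfl⟩)

lemma mem_oneT_iff {x y : List Bool} :
    y ∈ oneT x ↔ y = x ∨ ∃ (s t : List Bool) (a b : Bool),
      x = s ++ a :: b :: t ∧ y = s ++ b :: a :: t :=
  Set.mem_insert_iff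

lemma exists_delBall_oneT_of_oneT_delBall {x z w : List Bool} (hz : z ∈ oneT x)
    (hw : w ∈ delBall z) : ∃ y ∈ delBall x, w ∈ oneT y := by
  rcases mem_oneT_iff.mp hz with rfl | ⟨s, t, a, b, rfl, rfl⟩
  · exact ⟨w, hw, self_mem_oneT w⟩
  rcases mem_delBall_iff.mp hw with rfl | ⟨p, q, c, hpq, rfl⟩
  · exact ⟨_, self_mem_delBall _, swap_mem_oneT s t a b⟩
  rcases List.append_eq_append_iff.mp hpq with ⟨m, rfl, hm⟩ | ⟨m, rfl, hm⟩
  · match m, hm with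
    | [], hm =>
      obtain ⟨rfl, rfl⟩ : b = c ∧ a :: t = q := by simpa using hm
      exact ⟨s ++ a :: t, by simpa using append_mem_delBall (s ++ [a]) t b,
        by simpa using self_mem_oneT _⟩
    | [_], hm =>
      obtain ⟨rfl, rfl, rfl⟩ : b = _ ∧ a = c ∧ t = q := by simpa using hm
      exact ⟨s ++ b :: t, append_mem_delBall s (b :: t) a, by simpa using self_mem_oneT _⟩
    | _ :: _ :: m, hm =>
      obtain ⟨rfl, rfl, rfl⟩ : b = _ ∧ a = _ ∧ t = m ++ c :: q := by simpa using hm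
      exact ⟨s ++ a :: b :: (m ++ q),
        by simpa using append_mem_delBall (s ++ a :: b :: m) q c,
        by simpa using swap_mem_oneT s (m ++ q) a b⟩
  · match m, hm with
    | [], hm =>
      obtain ⟨rfl, rfl⟩ : c = b ∧ q = a :: t := by simpa using hm
      exact ⟨p ++ a :: t, by simpa using append_mem_delBall (p ++ [a]) t c, self_mem_oneT _⟩
    | _ :: m, hm =>
      obtain ⟨rfl, rfl⟩ : c = _ ∧ q = m ++ b :: a :: t := by simpa using hm
      exact ⟨p ++ m ++ a :: b :: t,
        by simpa using append_mem_delBall p (m ++ a :: b :: t) c,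
        by simpa using swap_mem_oneT (p ++ m) t a b⟩

lemma exists_oneT_delBall_of_delBall_oneT {x z w : List Bool} (hz : z ∈ delBall x)
    (hw : w ∈ oneT z) : ∃ y ∈ oneT x, w ∈ delBall y := by
  rcases mem_delBall_iff.mp hz with rfl | ⟨s, t, c, rfl, rfl⟩
  · exact ⟨w, hw, self_mem_delBall w⟩
  rcases mem_oneT_iff.mp hw with rfl | ⟨p, q, a, b, hpq, rfl⟩
  · exact ⟨_, self_mem_oneT _, append_mem_delBall s t c⟩
  rcases List.append_eq_append_iff.mp hpq with ⟨m, rfl, rfl⟩ | ⟨m, rfl, hm⟩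
  · exact ⟨s ++ c :: (m ++ b :: a :: q),
      by simpa using swap_mem_oneT (s ++ c :: m) q a b,
      by simpa using append_mem_delBall s (m ++ b :: a :: q) c⟩
  match m, hm with
  | [], hm =>
    obtain rfl : a :: b :: q = t := by simpa using hm
    exact ⟨p ++ c :: b :: a :: q,
      by simpa using swap_mem_oneT (p ++ [c]) q a b,
      by simpa using append_mem_delBall p (b :: a :: q) c⟩
  | [_], hm =>
    obtain ⟨rfl, rfl⟩ : a = _ ∧ b :: q = t := by simpa using hm
    by_cases hab : a = b
    · subst hab
      exact ⟨_, self_mem_oneT _, by simpa using append_mem_delBall (p ++ [a]) (a :: q) c⟩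
    obtain rfl | rfl : c = a ∨ c = b := by revert hab; cases a <;> cases b <;> cases c <;> decide
    · exact ⟨p ++ c :: b :: c :: q,
        by simpa using swap_mem_oneT (p ++ [c]) q c b,
        by simpa using append_mem_delBall p (b :: c :: q) c⟩
    · exact ⟨p ++ c :: a :: c :: q,
        by simpa using swap_mem_oneT p (c :: q) a c,
        by simpa using append_mem_delBall (p ++ [c, a]) q c⟩
  | _ :: _ :: m, hm =>
    obtain ⟨rfl, rfl, rfl⟩ : a = _ ∧ b = _ ∧ q = m ++ t := by simpa using hm
    exact ⟨p ++ b :: a :: m ++ c :: t,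
      by simpa using swap_mem_oneT p (m ++ c :: t) a b,
      by simpa using append_mem_delBall (p ++ b :: a :: m) t c⟩

lemma biUnion_ballT_delBall_subset (x : List Bool) :
    ∀ ℓ, (⋃ z ∈ ballT ℓ x, delBall z) ⊆ ⋃ y ∈ delBall x, ballT ℓ y
  | 0 => by simp [ballT]
  | ℓ + 1 => fun w hw => by
    obtain ⟨z, hz, hwz⟩ := Set.mem_iUnion₂.mp hw
    obtain ⟨v, hv, hzv⟩ := Set.mem_iUnion₂.mp hz
    obtain ⟨u, hu, hwu⟩ := exists_delBall_oneT_of_oneT_delBall hzv hwz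
    obtain ⟨y, hy, huy⟩ :=
      Set.mem_iUnion₂.mp (biUnion_ballT_delBall_subset x ℓ (Set.mem_biUnion hv hu))
    exact Set.mem_biUnion hy (Set.mem_biUnion huy hwu)

lemma biUnion_delBall_ballT_subset (x : List Bool) :
    ∀ ℓ, (⋃ y ∈ delBall x, ballT ℓ y) ⊆ ⋃ z ∈ ballT ℓ x, delBall z
  | 0 => by simp [ballT]
  | ℓ + 1 => fun w hw => by
    obtain ⟨y, hy, hwy⟩ := Set.mem_iUnion₂.mp hw
    obtain ⟨v, hv, hwv⟩ := Set.mem_iUnion₂.mp hwy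
    obtain ⟨u, hu, hvu⟩ :=
      Set.mem_iUnion₂.mp (biUnion_delBall_ballT_subset x ℓ (Set.mem_biUnion hy hv))
    obtain ⟨z, hz, hwz⟩ := exists_oneT_delBall_of_delBall_oneT hvu hwv
    exact Set.mem_biUnion (Set.mem_biUnion hu hz) hwz

theorem del_transL_commute_general (x : List Bool) (ℓ : ℕ) :
    (⋃ z ∈ ballT ℓ x, delBall z) = ⋃ z ∈ delBall x, ballT ℓ z :=
  (biUnion_ballT_delBall_subset x ℓ).antisymm (biUnion_delBall_ballT_subset x ℓ)

theorem del_transL_commute (x : List Bool) (ℓ : ℕ) (hℓ : 1 ≤ ℓ) :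
    (⋃ z ∈ ballT ℓ x, delBall z) = ⋃ z ∈ delBall x, ballT ℓ z :=
  del_transL_commute_general x ℓ
end

section
/- The code X_H(n,a) = {x ∈ F_2^n : Σ_{i=1}^{n-2} (2i+1)·x_i + (3n−2)·x_{n-1} + (2n−1)·x_n ≡ a (mod 6n−3)} can correct a single substitution error; equivalently, for any two distinct codewords x_1, x_2 ∈ X_H(n,a) and any two vectors e_j, e_k each having at most one nonzero coordinate, x_1 + e_j ≠ x_2 + e_k in F_2^n. -/
/-- The syndrome Σ_{i=1}^{n-2} (2i+1)·x_i + (3n−2)·x_{n-1} + (2n−1)·x_n of X_H(n,a). -/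
def sH {n : ℕ} (x : Fin n → ZMod 2) : ℤ :=
  ∑ i : Fin n,
    (if i.val = n - 1 then (2 * (n : ℤ) - 1)
      else if i.val = n - 2 then (3 * (n : ℤ) - 2)
      else (2 * ((i : ℕ) + 1 : ℤ) + 1)) * ((x i).val : ℤ)

private lemma key_abs (M d : ℤ) (hdvd : M ∣ d) (h1 : -M < d) (h2 : d < M)
    (h3 : d ≠ 0) : False :=
  h3 (Int.eq_zero_of_abs_lt_dvd hdvd (abs_lt.mpr ⟨h1, h2⟩))

private lemma zmod2_delta (u v : ZMod 2) (h : u ≠ v) :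
    ((u.val : ℤ) - (v.val : ℤ) = 1 ∨ (u.val : ℤ) - (v.val : ℤ) = -1) := by
  revert h; revert u v; decide

theorem XH_corrects_single_substitution {n : ℕ} (hn : 2 ≤ n) (a : ℤ)
    (x₁ x₂ : Fin n → ZMod 2)
    (h₁ : sH x₁ ≡ a [ZMOD (6 * (n : ℤ) - 3)])
    (h₂ : sH x₂ ≡ a [ZMOD (6 * (n : ℤ) - 3)])
    (hne : x₁ ≠ x₂)
    (e₁ e₂ : Fin n → ZMod 2)
    (he₁ : (Finset.univ.filter (fun i => e₁ i ≠ 0)).card ≤ 1)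
    (he₂ : (Finset.univ.filter (fun i => e₂ i ≠ 0)).card ≤ 1) :
    x₁ + e₁ ≠ x₂ + e₂ := by
  intro heq
  have hn' : (2 : ℤ) ≤ (n : ℤ) := by exact_mod_cast hn
  set M : ℤ := 6 * (n : ℤ) - 3 with hM
  set w : Fin n → ℤ := fun i =>
    if i.val = n - 1 then (2 * (n : ℤ) - 1)
    else if i.val = n - 2 then (3 * (n : ℤ) - 2)
    else (2 * ((i : ℕ) + 1 : ℤ) + 1) with hw
  have hw3 : ∀ i : Fin n, 3 ≤ w i := by
    intro i
    have hi := i.isLt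
    simp only [hw]
    split_ifs <;> push_cast <;> omega
  have hwub : ∀ i : Fin n, w i ≤ 3 * (n : ℤ) - 2 := by
    intro i
    have hi := i.isLt
    simp only [hw]
    split_ifs <;> push_cast <;> omega
  have hwpair : ∀ i j : Fin n, i ≠ j →
      w i + w j ≤ 5 * (n : ℤ) - 3 ∧ w i ≠ w j := by
    intro i j hij
    have hi := i.isLt
    have hj := j.isLt
    have hij' : i.val ≠ j.val := fun h => hij (Fin.ext h)
    simp only [hw]
    constructor
    · split_ifs <;> push_cast <;> omega
    · split_ifs <;> push_cast <;> omega
  -- difference of syndromes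
  set v : Fin n → ℤ := fun i => ((x₁ i).val : ℤ) - ((x₂ i).val : ℤ) with hv
  set d : ℤ := sH x₁ - sH x₂ with hd
  have hdvd : M ∣ d := (h₂.trans h₁.symm).dvd
  have hdsum : d = ∑ i : Fin n, w i * v i := by
    simp only [hd, sH, hw, hv, ← Finset.sum_sub_distrib, mul_sub]
  -- the set of differing coordinates
  set D : Finset (Fin n) := Finset.univ.filter (fun i => x₁ i ≠ x₂ i) with hD
  have hDsum : d = ∑ i ∈ D, w i * v i := by
    rw [hdsum]
    refine (Finset.sum_subset (Finset.subset_univ D) ?_).symm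
    intro i _ hiD
    have : x₁ i = x₂ i := by
      by_contra h
      exact hiD (Finset.mem_filter.mpr ⟨Finset.mem_univ i, h⟩)
    simp [hv, this]
  have hDne : D.Nonempty := by
    obtain ⟨i, hi⟩ := Function.ne_iff.mp hne
    exact ⟨i, Finset.mem_filter.mpr ⟨Finset.mem_univ i, hi⟩⟩
  have hDsub : D ⊆ (Finset.univ.filter (fun i => e₁ i ≠ 0)) ∪
      (Finset.univ.filter (fun i => e₂ i ≠ 0)) := by
    intro i hi
    have hxi : x₁ i ≠ x₂ i := (Finset.mem_filter.mp hi).2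
    have hpt : x₁ i + e₁ i = x₂ i + e₂ i := congrFun heq i
    by_contra h
    rw [Finset.mem_union, Finset.mem_filter, Finset.mem_filter] at h
    push_neg at h
    have h1 : e₁ i = 0 := h.1 (Finset.mem_univ i)
    have h2 : e₂ i = 0 := h.2 (Finset.mem_univ i)
    rw [h1, h2, add_zero, add_zero] at hpt
    exact hxi hpt
  have hDcard : D.card ≤ 2 := by
    calc D.card ≤ _ := Finset.card_le_card hDsub
    _ ≤ _ + _ := Finset.card_union_le _ _
    _ ≤ 2 := by omega
  have hvi : ∀ i ∈ D, v i = 1 ∨ v i = -1 := by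
    intro i hi
    exact zmod2_delta (x₁ i) (x₂ i) (Finset.mem_filter.mp hi).2
  have hc1 : 1 ≤ D.card := Finset.card_pos.mpr hDne
  have hcases : D.card = 1 ∨ D.card = 2 := by omega
  rcases hcases with hc | hc
  · -- exactly one differing coordinate
    obtain ⟨i, hDi⟩ := Finset.card_eq_one.mp hc
    have hiD : i ∈ D := by rw [hDi]; exact Finset.mem_singleton_self i
    have hdi : d = w i * v i := by rw [hDsum, hDi, Finset.sum_singleton]
    have h3 := hw3 i
    have hub := hwub i
    rcases hvi i hiD with h | h <;> rw [h] at hdi <;>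
      exact key_abs M d hdvd (by rw [hdi]; linarith) (by rw [hdi]; linarith)
        (by rw [hdi]; intro h0; linarith [h0])
  · -- exactly two differing coordinates
    obtain ⟨i, j, hij, hDij⟩ := Finset.card_eq_two.mp hc
    have hiD : i ∈ D := by rw [hDij]; simp
    have hjD : j ∈ D := by rw [hDij]; simp
    have hdi : d = w i * v i + w j * v j := by
      rw [hDsum, hDij, Finset.sum_pair hij]
    have h3i := hw3 i
    have h3j := hw3 j
    have hubi := hwub i
    have hubj := hwub j
    obtain ⟨hsum, hne'⟩ := hwpair i j hij
    have hnz : w i - w j ≠ 0 := sub_ne_zero.mpr hne'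
    rcases hvi i hiD with hi1 | hi1 <;> rcases hvi j hjD with hj1 | hj1 <;>
      rw [hi1, hj1] at hdi <;>
      refine key_abs M d hdvd ?_ ?_ ?_ <;> rw [hdi] <;>
      first
        | linarith
        | (intro h0; exact hnz (by linarith))
        | (intro h0; linarith)
end

section
/- There exists a ∈ {0,1,...,6n−4} such that the code {x ∈ F_2^n : Σ_{i=1}^{n-1} i·x_i + (2n−1)·x_n ≡ a (mod 6n−3)} has at least 2^n/(6n−3) codewords; consequently there exists a code of length n correcting a single deletion or single adjacent transposition with redundancy at most log(6n−3) bits. -/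
/- Pigeonhole: the `6n - 3` residue classes of the syndrome partition the `2 ^ n` binary words,
so one class holds at least `2 ^ n / (6n - 3)` of them; taking `log₂` bounds its redundancy. -/

open Finset

/-- The syndrome Σ_{i=1}^{n-1} i·x_i + (2n−1)·x_n of the code X_D(n,a). -/
def sD {n : ℕ} (x : Fin n → ZMod 2) : ℤ :=
  ∑ i : Fin n, (if i.val = n - 1 then (2 * (n : ℤ) - 1) else ((i : ℕ) + 1 : ℤ)) *
    ((x i).val : ℤ)

theorem Finset.exists_le_card_filter_emod_eq {α : Type*} (s : Finset α) (g : α → ℤ) {m : ℤ}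
    (hm : 0 < m) :
    ∃ a : ℕ, (a : ℤ) < m ∧ (#s : ℝ) / m ≤ #{x ∈ s | g x % m = a} := by
  lift m to ℕ using hm.le
  have hm' : 0 < m := by exact_mod_cast hm
  have hmaps : ∀ x ∈ s, (g x % m).toNat ∈ range m := fun x _ => by
    have := Int.emod_lt_of_pos (g x) hm
    simp only [mem_range]
    omega
  obtain ⟨a, ha, hle⟩ := exists_le_card_fiber_of_nsmul_le_card_of_maps_to hmaps
    (nonempty_range_iff.mpr hm'.ne') (b := (#s : ℝ) / m)
    (by rw [card_range, nsmul_eq_mul, mul_div_cancel₀ _ (by positivity)])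
  have hfiber : {x ∈ s | (g x % m).toNat = a} = {x ∈ s | g x % m = a} :=
    filter_congr fun x _ => by
      have := Int.emod_nonneg (g x) hm.ne'
      omega
  rw [hfiber] at hle
  exact ⟨a, by simpa using ha, by rwa [Int.cast_natCast]⟩

theorem Real.logb_sub_logb_le_of_div_le {b x c M : ℝ} (hb : 1 < b) (hx : 0 < x) (hM : 0 < M)
    (h : x / M ≤ c) : logb b x - logb b c ≤ logb b M := by
  have hxM : 0 < x / M := div_pos hx hM
  have := logb_le_logb_of_le hb hxM h
  rw [logb_div hx.ne' hM.ne'] at this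
  linarith

theorem exists_large_XD_code {n : ℕ} (hn : 1 ≤ n) :
    ∃ a : ℕ, a ≤ 6 * n - 4 ∧
      (2 : ℝ) ^ n / (6 * (n : ℝ) - 3) ≤
        ((Finset.univ.filter
          (fun x : Fin n → ZMod 2 => sD x % (6 * (n : ℤ) - 3) = (a : ℤ))).card : ℝ) ∧
      (n : ℝ) - Real.logb 2
          ((Finset.univ.filter
            (fun x : Fin n → ZMod 2 => sD x % (6 * (n : ℤ) - 3) = (a : ℤ))).card : ℝ)
        ≤ Real.logb 2 (6 * (n : ℝ) - 3) := by
  have hM : (0 : ℤ) < 6 * n - 3 := by omega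
  obtain ⟨a, haM, hle⟩ := exists_le_card_filter_emod_eq univ sD hM
  rw [card_univ, Fintype.card_fun, ZMod.card, Fintype.card_fin] at hle
  push_cast at hle
  refine ⟨a, by omega, hle, ?_⟩
  have hM' : (0 : ℝ) < 6 * n - 3 := by exact_mod_cast hM
  have hlog := Real.logb_sub_logb_le_of_div_le one_lt_two (by positivity) hM' hle
  rwa [Real.logb_pow, Real.logb_self_eq_one one_lt_two, mul_one] at hlog
end

section
/- Let y ∈ F_2^{n−1}, d_b ∈ F_2, and let x = I(y, d_b, i_1) and u = I(y, d_b, i_2) with i_2 > i_1. Set w = wt(y_{i_1}, ..., y_{i_2−1}). Then for any integer k, Σ_{i=1}^n (k+i)·u_i − Σ_{i=1}^n (k+i)·x_i = (i_2 − i_1)·d_b − w. -/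
/-- The shifted VT syndrome Σ_{i=1}^m (k+i)·x_i of a binary word, over the integers. -/
def listSyndK (k : ℤ) (x : List Bool) : ℤ :=
  ∑ i ∈ Finset.range x.length, (k + (i : ℤ) + 1) * (if x.getD i false then 1 else 0)

/-- `insertAt y v j` inserts the block `v` into `y` at (0-indexed) position `j`. -/
def insertAt (y v : List Bool) (j : ℕ) : List Bool :=
  y.take j ++ v ++ y.drop j

lemma listSyndK_cons (k : ℤ) (b : Bool) (y : List Bool) :
    listSyndK k (b :: y) = (k + 1) * (if b then 1 else 0) + listSyndK (k + 1) y := by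
  simp only [listSyndK, List.length_cons]
  rw [Finset.sum_range_succ']
  simp only [List.getD_cons_succ, List.getD_cons_zero, Nat.cast_zero]
  rw [add_comm]
  congr 1
  · ring
  · apply Finset.sum_congr rfl
    intro i _
    push_cast
    ring

lemma listSyndK_shift (y : List Bool) : ∀ k : ℤ,
    listSyndK (k + 1) y = listSyndK k y + (y.count true : ℤ) := by
  induction y with
  | nil => intro k; simp [listSyndK]
  | cons b ys ih =>
    intro k
    rw [listSyndK_cons, listSyndK_cons, ih (k+1)]
    rcases b with _ | _ <;> simp [List.count_cons] <;> try ring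

lemma listSyndK_insert (d : Bool) : ∀ (j : ℕ) (y : List Bool), j ≤ y.length → ∀ k : ℤ,
    listSyndK k (insertAt y [d] j) =
      listSyndK k y + (k + j + 1) * (if d then 1 else 0) + ((y.drop j).count true : ℤ) := by
  intro j
  induction j with
  | zero =>
    intro y _ k
    simp only [insertAt, List.take_zero, List.drop_zero, List.nil_append, List.cons_append,
      List.nil_append]
    rw [listSyndK_cons, listSyndK_shift]
    push_cast
    ring
  | succ j ih =>
    intro y hy k
    match y with
    | b :: ys =>
      have hj : j ≤ ys.length := by simpa using hy
      have : insertAt (b :: ys) [d] (j+1) = b :: insertAt ys [d] j := by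
        simp [insertAt]
      rw [this, listSyndK_cons, ih ys hj (k+1), listSyndK_cons]
      simp only [List.drop_succ_cons]
      push_cast
      ring

theorem syndK_diff_single_insertion (y : List Bool) (d : Bool)
    (i₁ i₂ : ℕ) (h₁₂ : i₁ < i₂) (h₂ : i₂ ≤ y.length) (k : ℤ) :
    listSyndK k (insertAt y [d] i₂) - listSyndK k (insertAt y [d] i₁) =
      ((i₂ : ℤ) - i₁) * (if d then 1 else 0)
        - (((y.drop i₁).take (i₂ - i₁)).count true : ℤ) := by
  rw [listSyndK_insert d i₂ y h₂ k, listSyndK_insert d i₁ y (le_of_lt (lt_of_lt_of_le h₁₂ h₂)) k]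
  have hsplit : (y.drop i₁).count true =
      ((y.drop i₁).take (i₂ - i₁)).count true + (y.drop i₂).count true := by
    conv_lhs => rw [← List.take_append_drop (i₂ - i₁) (y.drop i₁)]
    rw [List.count_append, List.drop_drop]
    rw [show i₁ + (i₂ - i₁) = i₂ from by omega]
  have : ((y.drop i₁).count true : ℤ) =
      (((y.drop i₁).take (i₂ - i₁)).count true : ℤ) + ((y.drop i₂).count true : ℤ) := by
    exact_mod_cast hsplit
  rw [this]
  ring
end

section
/- Let y ∈ F_2^{n−1}, d_b ∈ F_2, and suppose x = I(y, d_b, i_1) and u = I(y, d_b, i_2) with i_2 > i_1 and i_2 − i_1 < P. Then for any integer k and any modulus M ≥ P, if Σ_{i=1}^n (k+i)·x_i ≡ Σ_{i=1}^n (k+i)·u_i (mod M), then x = u. -/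
private def b2i (b : Bool) : ℤ := if b then 1 else 0

private lemma b2i_inj (a b : Bool) (h : b2i a = b2i b) : a = b := by
  cases a <;> cases b <;> simp [b2i] at h ⊢

private lemma b2i_mem (b : Bool) : b2i b = 0 ∨ b2i b = 1 := by
  cases b <;> simp [b2i]

private lemma syndK_cons (k : ℤ) (a : Bool) (y : List Bool) :
    listSyndK k (a :: y) = (k + 1) * b2i a + listSyndK (k + 1) y := by
  unfold listSyndK
  rw [List.length_cons, Finset.sum_range_succ']
  simp only [List.getD_cons_succ, List.getD_cons_zero]
  rw [add_comm]
  congr 1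
  · norm_num [b2i]
  · apply Finset.sum_congr rfl
    intro i _
    push_cast
    ring

private lemma syndK_succ (k : ℤ) (y : List Bool) :
    listSyndK (k + 1) y = listSyndK k y +
      ∑ j ∈ Finset.range y.length, b2i (y.getD j false) := by
  unfold listSyndK
  rw [← Finset.sum_add_distrib]
  apply Finset.sum_congr rfl
  intro i _
  unfold b2i
  ring

private lemma insertAt_zero (y : List Bool) (d : Bool) :
    insertAt y [d] 0 = d :: y := by simp [insertAt]

private lemma insertAt_cons (a : Bool) (y : List Bool) (d : Bool) (i : ℕ) :
    insertAt (a :: y) [d] (i + 1) = a :: insertAt y [d] i := by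
  simp [insertAt]

private lemma syndK_insertAt (d : Bool) (i : ℕ) :
    ∀ (y : List Bool) (k : ℤ), i ≤ y.length →
    listSyndK k (insertAt y [d] i) = listSyndK k y + (k + i + 1) * b2i d +
      ∑ j ∈ Finset.Ico i y.length, b2i (y.getD j false) := by
  induction i with
  | zero =>
    intro y k _
    rw [insertAt_zero, syndK_cons, syndK_succ]
    rw [Finset.range_eq_Ico]
    push_cast
    ring
  | succ i ih =>
    intro y k hy
    cases y with
    | nil => simp at hy
    | cons a y' =>
      rw [insertAt_cons, syndK_cons, ih y' (k + 1) (by simpa using hy), syndK_cons,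
        syndK_succ]
      have hre : ∑ j ∈ Finset.Ico (i + 1) (a :: y').length, b2i ((a :: y').getD j false)
          = ∑ j ∈ Finset.Ico i y'.length, b2i (y'.getD j false) := by
        rw [List.length_cons]
        rw [Finset.sum_Ico_eq_sum_range, Finset.sum_Ico_eq_sum_range]
        apply Finset.sum_congr (by congr 1; omega)
        intro j _
        have h : i + 1 + j = (i + j) + 1 := by omega
        rw [h, List.getD_cons_succ]
      rw [hre]
      push_cast
      ring

private lemma insertAt_succ_of_getD (y : List Bool) (d : Bool) (i : ℕ)
    (hi : i < y.length) (hd : y.getD i false = d) :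
    insertAt y [d] i = insertAt y [d] (i + 1) := by
  have h1 : y.drop i = y[i] :: y.drop (i + 1) := List.drop_eq_getElem_cons hi
  have h2 : y.take (i + 1) = y.take i ++ [y[i]] := by
    rw [List.take_succ]
    simp [List.getElem?_eq_getElem hi]
  have hyi : y[i] = d := by
    rwa [List.getD_eq_getElem y false hi] at hd
  unfold insertAt
  rw [h1, h2, hyi]
  simp

theorem syndK_modeq_implies_eq (y : List Bool) (d : Bool) (P M : ℕ)
    (i₁ i₂ : ℕ) (h₁₂ : i₁ < i₂) (h₂ : i₂ ≤ y.length) (hP : i₂ - i₁ < P)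
    (hM : P ≤ M) (k : ℤ)
    (hmod : listSyndK k (insertAt y [d] i₁) ≡ listSyndK k (insertAt y [d] i₂)
      [ZMOD (M : ℤ)]) :
    insertAt y [d] i₁ = insertAt y [d] i₂ := by
  have h₁ : i₁ ≤ y.length := le_of_lt (lt_of_lt_of_le h₁₂ h₂)
  rw [syndK_insertAt d i₁ y k h₁, syndK_insertAt d i₂ y k h₂] at hmod
  have hsplit : ∑ j ∈ Finset.Ico i₁ y.length, b2i (y.getD j false)
      = ∑ j ∈ Finset.Ico i₁ i₂, b2i (y.getD j false)
        + ∑ j ∈ Finset.Ico i₂ y.length, b2i (y.getD j false) :=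
    (Finset.sum_Ico_consecutive _ (le_of_lt h₁₂) h₂).symm
  have hcard : (Finset.Ico i₁ i₂).card = i₂ - i₁ := Nat.card_Ico i₁ i₂
  have hDval : ∑ j ∈ Finset.Ico i₁ i₂, (b2i (y.getD j false) - b2i d)
      = ∑ j ∈ Finset.Ico i₁ i₂, b2i (y.getD j false) - ((i₂ : ℤ) - (i₁ : ℤ)) * b2i d := by
    rw [Finset.sum_sub_distrib, Finset.sum_const, hcard, nsmul_eq_mul]
    have h : ((i₂ - i₁ : ℕ) : ℤ) = (i₂ : ℤ) - (i₁ : ℤ) := by omega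
    rw [h]
  have hdvd : (M : ℤ) ∣ ∑ j ∈ Finset.Ico i₁ i₂, (b2i (y.getD j false) - b2i d) := by
    have hd := hmod.dvd
    have heq : (listSyndK k y + (k + i₂ + 1) * b2i d +
        ∑ j ∈ Finset.Ico i₂ y.length, b2i (y.getD j false)) -
        (listSyndK k y + (k + i₁ + 1) * b2i d +
        ∑ j ∈ Finset.Ico i₁ y.length, b2i (y.getD j false))
        = -(∑ j ∈ Finset.Ico i₁ i₂, b2i (y.getD j false) - ((i₂ : ℤ) - i₁) * b2i d) := by
      rw [hsplit]; ring
    rw [heq] at hd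
    rw [hDval]
    exact dvd_neg.mp hd
  have habs : |∑ j ∈ Finset.Ico i₁ i₂, (b2i (y.getD j false) - b2i d)|
      ≤ (i₂ : ℤ) - (i₁ : ℤ) := by
    calc |∑ j ∈ Finset.Ico i₁ i₂, (b2i (y.getD j false) - b2i d)|
        ≤ ∑ j ∈ Finset.Ico i₁ i₂, |b2i (y.getD j false) - b2i d| :=
          Finset.abs_sum_le_sum_abs _ _
      _ ≤ ∑ _j ∈ Finset.Ico i₁ i₂, (1 : ℤ) := by
          apply Finset.sum_le_sum
          intro j _
          rcases b2i_mem (y.getD j false) with h | h <;> rcases b2i_mem d with h' | h' <;>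
            rw [h, h'] <;> norm_num
      _ = (i₂ : ℤ) - (i₁ : ℤ) := by
          rw [Finset.sum_const, hcard, nsmul_eq_mul, mul_one]; omega
  have hDzero : ∑ j ∈ Finset.Ico i₁ i₂, (b2i (y.getD j false) - b2i d) = 0 := by
    apply Int.eq_zero_of_abs_lt_dvd hdvd
    have h : ((i₂ : ℤ) - i₁) < (M : ℤ) := by omega
    exact lt_of_le_of_lt habs h
  have hterm : ∀ j ∈ Finset.Ico i₁ i₂, b2i (y.getD j false) - b2i d = 0 := by
    cases d with
    | false =>
      refine (Finset.sum_eq_zero_iff_of_nonneg ?_).mp hDzero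
      intro j _
      rcases b2i_mem (y.getD j false) with h | h <;>
        rw [h] <;> norm_num [b2i]
    | true =>
      refine (Finset.sum_eq_zero_iff_of_nonpos ?_).mp hDzero
      intro j _
      rcases b2i_mem (y.getD j false) with h | h <;>
        rw [h] <;> norm_num [b2i]
  have hconst : ∀ j, i₁ ≤ j → j < i₂ → y.getD j false = d := by
    intro j hj1 hj2
    have hsub := hterm j (Finset.mem_Ico.mpr ⟨hj1, hj2⟩)
    exact b2i_inj _ _ (by omega)
  have key : ∀ m : ℕ, i₁ + m ≤ i₂ → insertAt y [d] i₁ = insertAt y [d] (i₁ + m) := by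
    intro m
    induction m with
    | zero => intro _; rfl
    | succ m ih =>
      intro hm
      rw [ih (by omega)]
      have h : i₁ + (m + 1) = (i₁ + m) + 1 := by omega
      rw [h]
      exact insertAt_succ_of_getD y d (i₁ + m) (by omega)
        (hconst (i₁ + m) (by omega) (by omega))
  have hfin := key (i₂ - i₁) (by omega)
  rwa [show i₁ + (i₂ - i₁) = i₂ by omega] at hfin
end

section
/- The Shifted VT code SVT_{c,d}(n, M) = {x ∈ F_2^n : Σ i·x_i ≡ c (mod M), Σ x_i ≡ d (mod 2)} with M ≥ 2P−1 can correct a single deletion given an estimate of the deletion position accurate to within P: if y is obtained from x ∈ SVT_{c,d}(n,M) by deleting the bit at position k_D, and k̂_D satisfies |k_D − k̂_D| < P, then there is at most one pair (k', b) with |k' − k̂_D| < P (in the admissible window), b ∈ F_2, and I(y, b, k') ∈ SVT_{c,d}(n, M); moreover for that pair I(y, b, k') = x. -/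
/-!
Write `y` for the received word and `b₀ = x[k_D]`, so that `x = I(y, b₀, k_D)`. Inserting a bit
changes the weight by the bit, so the parity check forces `b = b₀`. Inserting `b` at `j` rather
than at `j + m` changes the VT syndrome by `(number of ones among y[j], …, y[j+m-1]) - m·b`, an
integer of absolute value at most `m`. Both positions lie within `P` of the estimate, so
`m ≤ 2P - 2 < M`, and agreement of the syndromes mod `M` makes this integer `0`: the skipped block
is a run of `b`s, and inserting `b` at either end of a run of `b`s gives the same word.
-/

/-- The VT syndrome Σ_{i=1}^m i·x_i of a binary word, over the integers. -/
def listSynd (x : List Bool) : ℤ :=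
  ∑ i ∈ Finset.range x.length, ((i : ℤ) + 1) * (if x.getD i false then 1 else 0)

/-- Membership in the Shifted VT code SVT_{c,d}(n,M). -/
def memSVT (n : ℕ) (c : ℤ) (d : ℤ) (M : ℕ) (x : List Bool) : Prop :=
  x.length = n ∧ listSynd x ≡ c [ZMOD (M : ℤ)] ∧ (x.count true : ℤ) ≡ d [ZMOD 2]

lemma count_true_eq_sum (l : List Bool) :
    (l.count true : ℤ) = ∑ i ∈ Finset.range l.length, (if l.getD i false then 1 else 0) := by
  induction l with
  | nil => simp
  | cons a l ih =>
    rw [List.length_cons, Finset.sum_range_succ']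
    cases a <;> simp [ih]

lemma listSynd_cons (a : Bool) (l : List Bool) :
    listSynd (a :: l) = (if a then 1 else 0) + listSynd l + l.count true := by
  have shift : ∀ i : ℕ, (((i + 1 : ℕ) : ℤ) + 1) * (if l.getD i false then 1 else 0)
      = ((i : ℤ) + 1) * (if l.getD i false then 1 else 0) + (if l.getD i false then 1 else 0) :=
    fun i => by push_cast; ring
  simp only [listSynd, List.length_cons, Finset.sum_range_succ', List.getD_cons_succ,
    List.getD_cons_zero, shift, Finset.sum_add_distrib, count_true_eq_sum]
  ring

lemma listSynd_append (l₁ l₂ : List Bool) :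
    listSynd (l₁ ++ l₂) = listSynd l₁ + listSynd l₂ + l₁.length * l₂.count true := by
  induction l₁ with
  | nil => simp [listSynd]
  | cons a l ih =>
    rw [List.cons_append, listSynd_cons, ih, listSynd_cons]
    push_cast [List.count_append, List.length_cons]
    ring

lemma count_true_insertAt (y : List Bool) (b : Bool) (j : ℕ) :
    ((insertAt y [b] j).count true : ℤ) = y.count true + (if b then 1 else 0) := by
  have h := congrArg (List.count true) (List.take_append_drop j y)
  rw [List.count_append] at h
  cases b <;> simp [insertAt] <;> omega

lemma listSynd_insertAt (y : List Bool) (b : Bool) {j : ℕ} (hj : j ≤ y.length) :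
    listSynd (insertAt y [b] j)
      = listSynd y + ((j : ℤ) + 1) * (if b then 1 else 0) + (y.drop j).count true := by
  have hlen : (y.take j).length = j := List.length_take_of_le hj
  conv_rhs => rw [← List.take_append_drop j y, listSynd_append, hlen]
  rw [insertAt, List.append_assoc, listSynd_append, List.singleton_append, listSynd_cons, hlen]
  cases b <;> simp <;> ring

lemma insertAt_eraseIdx_getElem (x : List Bool) {k : ℕ} (hk : k < x.length) :
    insertAt (x.eraseIdx k) [x[k]] k = x := by
  have hlen : (x.take k).length = k := List.length_take_of_le hk.le
  rw [insertAt, List.eraseIdx_eq_take_drop_succ, List.take_left' hlen, List.drop_left' hlen,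
    List.append_assoc, List.singleton_append, List.getElem_cons_drop, List.take_append_drop]

lemma eq_of_count_true_insertAt_modEq (y : List Bool) {b b' : Bool} (j k : ℕ)
    (h : ((insertAt y [b] j).count true : ℤ) ≡ (insertAt y [b'] k).count true [ZMOD 2]) :
    b = b' := by
  rw [count_true_insertAt, count_true_insertAt] at h
  cases b <;> cases b' <;> simp [Int.ModEq] at h ⊢ <;> omega

lemma List.eq_replicate_of_count_true (l : List Bool) (b : Bool)
    (h : (l.count true : ℤ) = l.length * (if b then 1 else 0)) :
    l = List.replicate l.length b := by
  cases b
  · simp_all [List.eq_replicate_iff, List.count_eq_zero]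
  · simp_all [List.eq_replicate_iff, List.count_eq_length, eq_comm]

lemma insertAt_eq_insertAt_add_of_replicate (y : List Bool) (b : Bool) (j m : ℕ)
    (h : (y.drop j).take m = List.replicate m b) :
    insertAt y [b] j = insertAt y [b] (j + m) := by
  have hdrop : y.drop j = List.replicate m b ++ (y.drop j).drop m := by
    rw [← h, List.take_append_drop]
  rw [insertAt, insertAt, List.take_add, h, ← List.drop_drop, hdrop, List.append_assoc,
    List.append_assoc, List.append_assoc, ← List.append_assoc [b], List.singleton_append,
    ← List.replicate_succ, List.replicate_succ', List.drop_left' List.length_replicate]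
  simp

lemma listSynd_insertAt_sub_insertAt_add (y : List Bool) (b : Bool) {j m : ℕ}
    (h : j + m ≤ y.length) :
    listSynd (insertAt y [b] j) - listSynd (insertAt y [b] (j + m))
      = ((y.drop j).take m).count true - m * (if b then 1 else 0) := by
  have hsplit := congrArg (List.count true) (List.take_append_drop m (y.drop j))
  rw [List.count_append, List.drop_drop] at hsplit
  rw [listSynd_insertAt y b (by omega), listSynd_insertAt y b h, ← hsplit]
  push_cast
  ring

lemma insertAt_eq_insertAt_add_of_listSynd_modEq (y : List Bool) (b : Bool) {j m M : ℕ}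
    (h : j + m ≤ y.length) (hm : m < M)
    (hsynd : listSynd (insertAt y [b] j) ≡ listSynd (insertAt y [b] (j + m)) [ZMOD M]) :
    insertAt y [b] j = insertAt y [b] (j + m) := by
  set block := (y.drop j).take m
  have hlen : block.length = m := by simp only [block, List.length_take, List.length_drop]; omega
  have hcount_le : block.count true ≤ m := hlen ▸ List.count_le_length
  have hdvd : (M : ℤ) ∣ block.count true - m * (if b then 1 else 0) := by
    rw [← listSynd_insertAt_sub_insertAt_add y b h]
    exact hsynd.symm.dvd
  have hzero : (block.count true : ℤ) - m * (if b then 1 else 0) = 0 := by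
    refine Int.eq_zero_of_abs_lt_dvd hdvd (abs_lt.mpr ⟨?_, ?_⟩) <;> split_ifs <;> omega
  have hrun := List.eq_replicate_of_count_true block b (by rw [hlen]; linarith)
  rw [hlen] at hrun
  exact insertAt_eq_insertAt_add_of_replicate y b j m hrun

lemma insertAt_eq_insertAt_of_listSynd_modEq (y : List Bool) (b : Bool) {j k M : ℕ}
    (hj : j ≤ y.length) (hk : k ≤ y.length) (hjk : |(j : ℤ) - k| < M)
    (hsynd : listSynd (insertAt y [b] j) ≡ listSynd (insertAt y [b] k) [ZMOD M]) :
    insertAt y [b] j = insertAt y [b] k := by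
  rw [abs_lt] at hjk
  rcases le_total j k with hle | hle
  · obtain ⟨m, rfl⟩ := Nat.exists_eq_add_of_le hle
    exact insertAt_eq_insertAt_add_of_listSynd_modEq y b hk (by omega) hsynd
  · obtain ⟨m, rfl⟩ := Nat.exists_eq_add_of_le hle
    exact (insertAt_eq_insertAt_add_of_listSynd_modEq y b hj (by omega) hsynd.symm).symm

theorem SVT_corrects_single_deletion_with_estimate
    (n P M : ℕ) (c d : ℤ) (hM : 2 * P - 1 ≤ M)
    (x : List Bool) (hx : memSVT n c d M x)
    (kD : ℕ) (hkD : kD < x.length)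
    (kHat : ℤ) (hest : |(kD : ℤ) - kHat| < (P : ℤ)) :
    ∀ (k' : ℕ) (b : Bool), k' ≤ (x.eraseIdx kD).length →
      |(k' : ℤ) - kHat| < (P : ℤ) →
      memSVT n c d M (insertAt (x.eraseIdx kD) [b] k') →
      insertAt (x.eraseIdx kD) [b] k' = x := by
  intro k' b hk' hwin hz
  obtain ⟨-, hxs, hxp⟩ := hx
  obtain ⟨-, hzs, hzp⟩ := hz
  have hx_eq := insertAt_eraseIdx_getElem x hkD
  rw [← hx_eq] at hxs hxp
  obtain rfl : b = x[kD] := eq_of_count_true_insertAt_modEq _ _ _ (hzp.trans hxp.symm)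
  have hkD' : kD ≤ (x.eraseIdx kD).length := by rw [List.length_eraseIdx_of_lt hkD]; omega
  have hdist : |(k' : ℤ) - kD| < M := by rw [abs_lt] at *; omega
  rw [insertAt_eq_insertAt_of_listSynd_modEq _ _ hk' hkD' hdist (hzs.trans hxs.symm), hx_eq]
end

section
/- Let b ≥ 5 be odd, and suppose v ∈ F_2^B is a b-repeating pattern (i.e., for every k with 1 ≤ k ≤ ⌊B/b⌋, (v_1,...,v_b) = (v_{bk+1},...,v_{bk+b})) that appears as a contiguous substring of some x in the balanced set Bal(n,b). Then B < b^4·log n. -/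
/-- Membership in the balanced set Bal(n,b): every window of length
`B ≥ b⁴·log₂ n` has weight strictly between `B/2 − B/(3b)` and `B/2 + B/(3b)`. -/
def memBal (n b : ℕ) (x : List Bool) : Prop :=
  x.length = n ∧
  ∀ B j : ℕ, B ≤ n → ((b : ℝ) ^ 4 * Real.logb 2 n ≤ (B : ℝ)) → j + B ≤ n →
    ((B : ℝ) / 2 - (B : ℝ) / (3 * b) < (((x.drop j).take B).count true : ℝ) ∧
     (((x.drop j).take B).count true : ℝ) < (B : ℝ) / 2 + (B : ℝ) / (3 * b))

/-!
A `b`-periodic word of length `B = q b + r` has weight `q w + s` with `w` the weight of one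
period and `s ≤ r`. As `b` is odd, `2 w ≠ b`, so the imbalance `|2·weight − B|` is at least
`q − r`. Balance of a window of length `B` bounds the imbalance by `2B/(3b)`, which forces
`B < 3b(b + 1) ≤ b⁴`; hence a long window cannot be periodic.
-/

theorem Int.sub_le_abs_two_mul_sub_of_odd {b w q r s : ℕ} (hb : Odd b) (hs : s ≤ r) :
    (q : ℤ) - r ≤ |2 * ((q : ℤ) * w + s) - ((q : ℤ) * b + r)| := by
  obtain ⟨m, rfl⟩ := hb
  rcases le_or_gt w m with hw | hw
  · refine le_abs.mpr (Or.inr ?_)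
    have : (0 : ℤ) ≤ q * (m - w) := mul_nonneg (by positivity) (by omega)
    push_cast
    nlinarith
  · refine le_abs.mpr (Or.inl ?_)
    have : (0 : ℤ) ≤ q * (w - m - 1) := mul_nonneg (by positivity) (by omega)
    push_cast
    nlinarith

def IsRepeatingPattern {α : Type*} (b : ℕ) (v : List α) : Prop :=
  ∀ k : ℕ, 1 ≤ k → b * k + b ≤ v.length → v.take b = (v.drop (b * k)).take b

namespace IsRepeatingPattern

variable {α : Type*} [BEq α] {b : ℕ} {v : List α}

theorem count_take_mul (hv : IsRepeatingPattern b v) (a : α) {k : ℕ}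
    (hk : b * k ≤ v.length) : (v.take (b * k)).count a = k * (v.take b).count a := by
  induction k with
  | zero => simp
  | succ k ih =>
    have hblock : (v.drop (b * k)).take b = v.take b := by
      rcases Nat.eq_zero_or_pos k with rfl | hk0
      · simp
      · exact (hv k hk0 (by rwa [Nat.mul_succ] at hk)).symm
    rw [Nat.mul_succ, List.take_add, List.count_append,
      ih ((Nat.mul_le_mul_left b k.le_succ).trans hk), hblock, Nat.succ_mul]

theorem exists_count_eq (hv : IsRepeatingPattern b v) (a : α) :
    ∃ s ≤ v.length % b, v.count a = v.length / b * (v.take b).count a + s := by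
  refine ⟨(v.drop (b * (v.length / b))).count a, ?_, ?_⟩
  · calc (v.drop (b * (v.length / b))).count a ≤ (v.drop (b * (v.length / b))).length :=
          List.count_le_length
      _ = v.length % b := by rw [List.length_drop, Nat.mod_eq_sub_mul_div]
  · conv_lhs => rw [← List.take_append_drop (b * (v.length / b)) v]
    rw [List.count_append, hv.count_take_mul a (Nat.mul_div_le _ _)]

theorem div_sub_mod_le_abs (hv : IsRepeatingPattern b v) (hb : Odd b) (a : α) :
    ((v.length / b : ℕ) : ℤ) - (v.length % b : ℕ) ≤ |2 * (v.count a : ℤ) - v.length| := by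
  obtain ⟨s, hs, hcount⟩ := hv.exists_count_eq a
  have hlen : (v.length : ℤ) = (v.length / b : ℕ) * b + (v.length % b : ℕ) := by
    rw [mul_comm]; exact_mod_cast (Nat.div_add_mod v.length b).symm
  rw [hcount, hlen]
  push_cast
  exact Int.sub_le_abs_two_mul_sub_of_odd hb hs

theorem length_lt (hv : IsRepeatingPattern b v) (hb : Odd b) (a : α)
    (hbal : 3 * b * |2 * (v.count a : ℤ) - v.length| < 2 * v.length) :
    v.length < 3 * b * (b + 1) := by
  have himb := hv.div_sub_mod_le_abs hb a
  have hdm := Nat.div_add_mod v.length b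
  have hr := Nat.mod_lt v.length hb.pos
  set q := v.length / b
  set r := v.length % b
  have hscaled : 3 * (b : ℤ) * (q - r) < 2 * v.length :=
    (mul_le_mul_of_nonneg_left himb (by positivity)).trans_lt hbal
  zify at hdm hr ⊢
  nlinarith

end IsRepeatingPattern

theorem memBal.two_le {n b : ℕ} {x : List Bool} (hx : memBal n b x) : 2 ≤ n := by
  by_contra! hn
  have hlog : Real.logb 2 n = 0 := by interval_cases n <;> simp
  have h := (hx.2 0 0 n.zero_le (by simp [hlog]) (by simp)).1
  simp at h

theorem memBal.abs_two_mul_count_sub_lt {n b : ℕ} {x v : List Bool} (hx : memBal n b x)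
    (hb : 0 < b) (hv : v <:+: x) (hlong : (b : ℝ) ^ 4 * Real.logb 2 n ≤ v.length) :
    3 * b * |2 * (v.count true : ℝ) - v.length| < 2 * v.length := by
  obtain ⟨p, t, rfl⟩ := hv
  have hn := hx.1
  simp only [List.length_append] at hn
  have hwin := hx.2 v.length p.length (by omega) hlong (by omega)
  rw [List.append_assoc, List.drop_left, List.take_left] at hwin
  have hb' : (0 : ℝ) < 3 * b := by positivity
  have habs : |2 * (v.count true : ℝ) - v.length| < 2 * (v.length / (3 * b)) := by
    rw [abs_sub_lt_iff]; constructor <;> linarith [hwin.1, hwin.2]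
  calc 3 * b * |2 * (v.count true : ℝ) - v.length|
      < 3 * b * (2 * (v.length / (3 * b))) := mul_lt_mul_of_pos_left habs hb'
    _ = 2 * v.length := by field_simp

theorem repeating_pattern_short (n b B : ℕ) (hb : 5 ≤ b) (hbodd : Odd b)
    (x v : List Bool) (hx : memBal n b x) (hvlen : v.length = B)
    (hrep : ∀ k : ℕ, 1 ≤ k → b * k + b ≤ B →
      v.take b = (v.drop (b * k)).take b)
    (hinf : v <:+: x) :
    (B : ℝ) < (b : ℝ) ^ 4 * Real.logb 2 n := by
  subst hvlen
  by_contra! hlong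
  have hn := hx.two_le
  have hlog : 1 ≤ Real.logb 2 n := by
    rw [Real.le_logb_iff_rpow_le (by norm_num) (by positivity)]
    simpa using (Nat.cast_le (α := ℝ)).mpr hn
  have hbal := hx.abs_two_mul_count_sub_lt (by omega) hinf hlong
  have hshort : v.length < 3 * b * (b + 1) :=
    IsRepeatingPattern.length_lt hrep hbodd true (by exact_mod_cast hbal)
  have hpow : 3 * b * (b + 1) ≤ b ^ 4 := by
    have : 25 ≤ b ^ 2 := by nlinarith
    nlinarith
  have hlongR : (b : ℝ) ^ 4 ≤ v.length := by
    nlinarith [pow_pos (by positivity : (0 : ℝ) < b) 4]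
  have hlongN : b ^ 4 ≤ v.length := by exact_mod_cast hlongR
  omega
end

section
/- Let n ≥ 10 be a power of two and b ≥ 5. Then the size of the balanced set Bal(n,b) satisfies log_2 |Bal(n,b)| ≥ n + log_2(1 − 2·n^{2 − (2/9)b^2·log_2 e}); in particular log_2 |Bal(n,b)| ≥ n − 1. -/
open MeasureTheory ProbabilityTheory Finset Real

lemma measureReal_uniformOn_univ {Ω : Type*} [Finite Ω] [MeasurableSpace Ω]
    [MeasurableSingletonClass Ω] (s : Set Ω) :
    (uniformOn Set.univ : Measure Ω).real s = s.ncard / Nat.card Ω := by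
  have := Fintype.ofFinite Ω
  rw [Measure.real, uniformOn_univ, ENNReal.toReal_div,
    Measure.count_apply s.toFinite.measurableSet, Set.Finite.encard_eq_coe_toFinset_card s.toFinite]
  simp [Set.ncard_eq_toFinset_card s s.toFinite]

lemma integral_uniformOn_bool (g : Bool → ℝ) :
    ∫ x, g x ∂(uniformOn Set.univ : Measure Bool) = (g true + g false) / 2 := by
  rw [integral_fintype .of_finite]
  simp only [Fintype.sum_bool, smul_eq_mul, measureReal_uniformOn_univ, Set.ncard_singleton,
    Nat.card_eq_fintype_card, Fintype.card_bool]
  ring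

lemma uniformOn_univ_eq_pi {ι Ω : Type*} [Fintype ι] [MeasurableSpace Ω] [Finite Ω]
    [MeasurableSingletonClass Ω] :
    (uniformOn Set.univ : Measure (ι → Ω)) = Measure.pi fun _ => uniformOn Set.univ := by
  rw [← uniformOn_pi, Set.pi_univ]

lemma measureReal_sum_ge_le_of_uniformOn_bool {ι : Type*} [Fintype ι] (g : Bool → ℝ)
    (hg : ∀ x, g x ∈ Set.Icc (-(1 / 2)) (1 / 2)) (hg0 : g true + g false = 0) (s : Finset ι)
    {t : ℝ} (ht : 0 ≤ t) :
    (uniformOn Set.univ : Measure (ι → Bool)).real {ω | t ≤ ∑ i ∈ s, g (ω i)} ≤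
      exp (-2 * t ^ 2 / #s) := by
  rw [uniformOn_univ_eq_pi]
  have hgm : Measurable g := measurable_of_finite g
  have hsubG (i : ι) : HasSubgaussianMGF (fun ω : ι → Bool => g (ω i))
      ((‖(1 / 2 : ℝ) - -(1 / 2)‖₊ / 2) ^ 2) (Measure.pi fun _ => uniformOn Set.univ) := by
    apply hasSubgaussianMGF_of_mem_Icc_of_integral_eq_zero
      (hgm.comp (measurable_pi_apply i)).aemeasurable (.of_forall fun ω => hg _)
    show ∫ ω : ι → Bool, g (ω i) ∂_ = 0
    rw [← integral_map (measurable_pi_apply i).aemeasurable hgm.aestronglyMeasurable,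
      (measurePreserving_eval _ i).map_eq, integral_uniformOn_bool, hg0, zero_div]
  refine (HasSubgaussianMGF.measure_sum_ge_le_of_iIndepFun
    (iIndepFun_pi (X := fun _ => g) fun _ => hgm.aemeasurable)
    (s := s) (fun i _ => hsubG i) ht).trans_eq ?_
  congr 1
  norm_num
  ring

lemma measureReal_card_filter_deviation_le {ι : Type*} [Fintype ι] (s : Finset ι) {t : ℝ}
    (ht : 0 ≤ t) :
    (uniformOn Set.univ : Measure (ι → Bool)).real
        {ω | ¬ ((#s : ℝ) / 2 - t < #{i ∈ s | ω i} ∧ (#{i ∈ s | ω i} : ℝ) < #s / 2 + t)} ≤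
      2 * exp (-2 * t ^ 2 / #s) := by
  set g : Bool → ℝ := fun x => (if x then 1 else 0) - 1 / 2
  have hg : ∀ x, g x ∈ Set.Icc (-(1 / 2)) (1 / 2) := by
    intro x; cases x <;> norm_num [g]
  have hg0 : g true + g false = 0 := by norm_num [g]
  have hsum (ω : ι → Bool) : ∑ i ∈ s, g (ω i) = #{i ∈ s | ω i} - #s / 2 := by
    rw [sum_sub_distrib, sum_boole, sum_const, nsmul_eq_mul]
    ring
  calc _ ≤ (uniformOn Set.univ : Measure (ι → Bool)).real
          ({ω | t ≤ ∑ i ∈ s, g (ω i)} ∪ {ω | t ≤ ∑ i ∈ s, (-g) (ω i)}) := by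
        refine measureReal_mono (fun ω hω => ?_)
        simp only [Set.mem_ofPred_eq, not_and_or, not_lt] at hω
        simp only [Set.mem_union, Set.mem_ofPred_eq, Pi.neg_apply, sum_neg_distrib, hsum]
        rcases hω with h | h
        · right; linarith
        · left; linarith
    _ ≤ exp (-2 * t ^ 2 / #s) + exp (-2 * t ^ 2 / #s) :=
        (measureReal_union_le _ _).trans (add_le_add
          (measureReal_sum_ge_le_of_uniformOn_bool g hg hg0 s ht)
          (measureReal_sum_ge_le_of_uniformOn_bool (-g)
            (fun x => by simpa [neg_le, and_comm] using hg x) (by simp [← neg_add, hg0]) s ht))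
    _ = 2 * exp (-2 * t ^ 2 / #s) := by ring

lemma exp_neg_sq_div_le_rpow {x b B : ℝ} (hx : 0 < x) (hb : 0 < b) (hB0 : 0 < B)
    (hB : b ^ 4 * logb 2 x ≤ B) :
    exp (-2 * (B / (3 * b)) ^ 2 / B) ≤ x ^ (-((2 / 9) * b ^ 2 * logb 2 (exp 1))) := by
  rw [rpow_def_of_pos hx, exp_le_exp, logb, log_exp]
  have hlog2 : 0 < log 2 := log_pos one_lt_two
  rw [div_le_iff₀ hB0]
  have key : b ^ 4 * log x ≤ B * log 2 := by rwa [logb, mul_div_assoc', div_le_iff₀ hlog2] at hB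
  field_simp
  nlinarith [sq_nonneg b, pow_pos hb 2]

lemma two_mul_rpow_le_half {x b : ℝ} (hx : 2 ≤ x) (hb : 5 ≤ b) :
    2 * x ^ (2 - (2 / 9) * b ^ 2 * logb 2 (exp 1)) ≤ 1 / 2 := by
  have hlogbe : 1 ≤ logb 2 (exp 1) := by
    rw [le_logb_iff_rpow_le one_lt_two (exp_pos 1), rpow_one]
    linarith [add_one_le_exp (1 : ℝ)]
  have hexp : 2 - (2 / 9) * b ^ 2 * logb 2 (exp 1) ≤ -2 := by nlinarith
  calc 2 * x ^ (2 - (2 / 9) * b ^ 2 * logb 2 (exp 1)) ≤ 2 * x ^ (-2 : ℝ) := by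
        gcongr
        · linarith
    _ ≤ 2 * 2 ^ (-2 : ℝ) := by
        gcongr ?_ * ?_
        exact rpow_le_rpow_of_nonpos (by norm_num) hx (by norm_num)
    _ = 1 / 2 := by norm_num

/-- `k ↦ j + k`. -/
def windowEmb {n : ℕ} (j B : ℕ) (h : j + B ≤ n) : Fin B ↪ Fin n :=
  (Fin.natAddEmb j).trans (Fin.castLEEmb h)

lemma count_take_drop_ofFn {n j B : ℕ} (h : j + B ≤ n) (ω : Fin n → Bool) :
    (((List.ofFn ω).drop j).take B).count true = #{i ∈ univ.map (windowEmb j B h) | ω i} := by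
  have hwin : ((List.ofFn ω).drop j).take B = List.ofFn (ω ∘ windowEmb j B h) :=
    List.ext_getElem (by simp; omega) fun k _ _ => by simp [windowEmb]
  rw [hwin, filter_map, card_map]
  simpa using (Fin.card_filter_univ_eq_vector_get_eq_count true
    (List.Vector.ofFn (ω ∘ windowEmb j B h))).symm

lemma ncard_setOf_eq_ncard_setOf_ofFn {α : Type*} {n : ℕ} {P : List α → Prop}
    (hP : ∀ x, P x → x.length = n) :
    {x | P x}.ncard = {ω : Fin n → α | P (List.ofFn ω)}.ncard := by
  rw [← Set.ncard_image_of_injective _ List.ofFn_injective]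
  congr 1
  ext x
  simp only [Set.mem_ofPred_eq, Set.mem_image]
  constructor
  · intro hx
    obtain rfl := hP x hx
    exact ⟨fun i => x[i.val], by rwa [List.ofFn_getElem], List.ofFn_getElem⟩
  · rintro ⟨ω, hω, rfl⟩
    exact hω

lemma measureReal_window_unbalanced_le {n b B j : ℕ} (hn : 1 < n) (hb : 0 < b)
    (hB : (b : ℝ) ^ 4 * logb 2 n ≤ B) (hjB : j + B ≤ n) :
    (uniformOn Set.univ : Measure (Fin n → Bool)).real {ω |
        ¬ ((B : ℝ) / 2 - (B : ℝ) / (3 * b) < ((((List.ofFn ω).drop j).take B).count true : ℝ) ∧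
          ((((List.ofFn ω).drop j).take B).count true : ℝ) < (B : ℝ) / 2 + (B : ℝ) / (3 * b))} ≤
      2 * (n : ℝ) ^ (-((2 / 9) * (b : ℝ) ^ 2 * logb 2 (exp 1))) := by
  have hlogn : 0 < logb 2 (n : ℝ) := logb_pos one_lt_two (by exact_mod_cast hn)
  have hB0 : (0 : ℝ) < B := lt_of_lt_of_le (by positivity) hB
  have hcard : (#(univ.map (windowEmb j B hjB)) : ℝ) = B := by simp
  simp_rw [count_take_drop_ofFn hjB, ← hcard]
  refine (measureReal_card_filter_deviation_le _ (by positivity)).trans ?_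
  rw [hcard]
  gcongr
  exact exp_neg_sq_div_le_rpow (by positivity) (by positivity) hB0 hB

lemma measureReal_not_memBal_ofFn_le {n b : ℕ} (hn : 1 < n) (hb : 0 < b) :
    (uniformOn Set.univ : Measure (Fin n → Bool)).real {ω | ¬ memBal n b (List.ofFn ω)} ≤
      2 * (n : ℝ) ^ (2 - (2 / 9) * (b : ℝ) ^ 2 * logb 2 (exp 1)) := by
  set c : ℝ := (2 / 9) * (b : ℝ) ^ 2 * logb 2 (exp 1)
  have hlogn : 0 < logb 2 (n : ℝ) := logb_pos one_lt_two (by exact_mod_cast hn)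
  set windows := (Icc 1 n ×ˢ range n).filter fun p : ℕ × ℕ =>
    (b : ℝ) ^ 4 * logb 2 n ≤ p.1 ∧ p.2 + p.1 ≤ n
  set unbalanced : ℕ × ℕ → Set (Fin n → Bool) := fun p => {ω |
    ¬ ((p.1 : ℝ) / 2 - (p.1 : ℝ) / (3 * b) < ((((List.ofFn ω).drop p.2).take p.1).count true : ℝ) ∧
      ((((List.ofFn ω).drop p.2).take p.1).count true : ℝ) < (p.1 : ℝ) / 2 + (p.1 : ℝ) / (3 * b))}
  have hcover : {ω : Fin n → Bool | ¬ memBal n b (List.ofFn ω)} ⊆ ⋃ p ∈ windows, unbalanced p := by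
    intro ω hω
    simp only [memBal, List.length_ofFn, true_and, not_forall, Set.mem_ofPred_eq] at hω
    obtain ⟨B, j, hBn, hB, hjB, hbad⟩ := hω
    have hB0 : 0 < B := by
      have : (0 : ℝ) < B := lt_of_lt_of_le (by positivity) hB
      exact_mod_cast this
    simp only [Set.mem_iUnion]
    exact ⟨(B, j), by simp [windows, hB, hjB]; omega, hbad⟩
  have hcard : (#windows : ℝ) ≤ (n : ℝ) ^ 2 := by
    have : #windows ≤ n ^ 2 := (card_filter_le _ _).trans (by simp [sq])
    exact_mod_cast this
  calc _ ≤ ∑ p ∈ windows, (uniformOn Set.univ : Measure (Fin n → Bool)).real (unbalanced p) :=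
        (measureReal_mono hcover (measure_ne_top _ _)).trans (measureReal_biUnion_finset_le _ _)
    _ ≤ ∑ _p ∈ windows, 2 * (n : ℝ) ^ (-c) := sum_le_sum fun p hp => by
        simp only [windows, mem_filter] at hp
        exact measureReal_window_unbalanced_le hn hb hp.2.1 hp.2.2
    _ ≤ (n : ℝ) ^ 2 * (2 * (n : ℝ) ^ (-c)) := by
        rw [sum_const, nsmul_eq_mul]
        gcongr
    _ = 2 * (n : ℝ) ^ (2 - c) := by
        rw [sub_eq_add_neg, rpow_add (by positivity), rpow_two]
        ring

lemma le_ncard_setOf_memBal {n b : ℕ} (hn : 1 < n) (hb : 0 < b) :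
    2 ^ n * (1 - 2 * (n : ℝ) ^ (2 - (2 / 9) * (b : ℝ) ^ 2 * logb 2 (exp 1))) ≤
      {x : List Bool | memBal n b x}.ncard := by
  rw [ncard_setOf_eq_ncard_setOf_ofFn fun x hx => hx.1]
  have hcount := measureReal_uniformOn_univ {ω : Fin n → Bool | memBal n b (List.ofFn ω)}
  rw [Nat.card_eq_fintype_card, Fintype.card_fun, Fintype.card_bool, Fintype.card_fin] at hcount
  have hcompl := measureReal_compl (μ := (uniformOn Set.univ : Measure (Fin n → Bool)))
    (Set.toFinite {ω : Fin n → Bool | memBal n b (List.ofFn ω)}).measurableSet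
  have hbad := measureReal_not_memBal_ofFn_le hn hb
  simp only [Set.compl_ofPred, probReal_univ] at hcompl
  rw [hcompl, hcount] at hbad
  push_cast at hbad
  have := (le_div_iff₀ (by positivity)).1 (sub_le_comm.1 hbad)
  linarith

theorem bal_size_lower_bound_general (n b : ℕ) (hn : 10 ≤ n) (hb : 5 ≤ b) :
    (n : ℝ) + Real.logb 2
        (1 - 2 * (n : ℝ) ^ ((2 : ℝ) - (2 / 9) * (b : ℝ) ^ 2 * Real.logb 2 (Real.exp 1)))
      ≤ Real.logb 2 ({x : List Bool | memBal n b x}.ncard : ℝ) ∧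
    (n : ℝ) - 1 ≤ Real.logb 2 ({x : List Bool | memBal n b x}.ncard : ℝ) := by
  set ε := 2 * (n : ℝ) ^ ((2 : ℝ) - (2 / 9) * (b : ℝ) ^ 2 * logb 2 (exp 1))
  have hε : ε ≤ 1 / 2 := two_mul_rpow_le_half (by norm_cast; omega) (by exact_mod_cast hb)
  have hcard : 2 ^ n * (1 - ε) ≤ {x : List Bool | memBal n b x}.ncard :=
    le_ncard_setOf_memBal (by omega) (by omega)
  have hpos : 0 < 1 - ε := by linarith
  have hlog : (n : ℝ) + logb 2 (1 - ε) ≤ logb 2 {x : List Bool | memBal n b x}.ncard := by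
    calc (n : ℝ) + logb 2 (1 - ε) = logb 2 (2 ^ n * (1 - ε)) := by
          rw [logb_mul (by positivity) hpos.ne', logb_pow, logb_self_eq_one one_lt_two,
            mul_one]
      _ ≤ _ := logb_le_logb_of_le one_lt_two (mul_pos (by positivity) hpos) hcard
  refine ⟨hlog, ?_⟩
  have hhalf : logb 2 (1 / 2) ≤ logb 2 (1 - ε) :=
    logb_le_logb_of_le one_lt_two (by norm_num) (by linarith)
  rw [one_div, logb_inv, logb_self_eq_one one_lt_two] at hhalf
  linarith

theorem bal_size_lower_bound (n b : ℕ) (hn : 10 ≤ n) (hpow : ∃ m : ℕ, n = 2 ^ m)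
    (hb : 5 ≤ b) :
    (n : ℝ) + Real.logb 2
        (1 - 2 * (n : ℝ) ^ ((2 : ℝ) - (2 / 9) * (b : ℝ) ^ 2 * Real.logb 2 (Real.exp 1)))
      ≤ Real.logb 2 ({x : List Bool | memBal n b x}.ncard : ℝ) ∧
    (n : ℝ) - 1 ≤ Real.logb 2 ({x : List Bool | memBal n b x}.ncard : ℝ) :=
  bal_size_lower_bound_general n b hn hb
end

section
/- For any binary vector x of length n, the set of words obtainable by a length-t block deletion composed (in either order) with a length-t adjacent block transposition, for any t ≤ b, is contained in the set of words obtainable from x by at most 2b^2 adjacent (single-symbol) transpositions followed by a block deletion of length at most b: B_{BT∧D,b}(x) ⊆ B_{D,≤b}(B_{T,2b^2}(x)). -/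
/-- The set of words obtained from `x` by deleting exactly `t` consecutive symbols. -/
def delBlock (t : ℕ) (x : List Bool) : Set (List Bool) :=
  {y | ∃ k, k + t ≤ x.length ∧ y = x.take k ++ x.drop (k + t)}

/-- The set of words obtained from `x` by at most one transposition of two adjacent
blocks of length `t` each. -/
def btBall (t : ℕ) (x : List Bool) : Set (List Bool) :=
  insert x {y | ∃ s u v w : List Bool,
    x = s ++ u ++ v ++ w ∧ u.length = t ∧ v.length = t ∧ y = s ++ v ++ u ++ w}

lemma mem_ballT_self (ℓ : ℕ) (x : List Bool) : x ∈ ballT ℓ x := by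
  induction ℓ with
  | zero => simp [ballT]
  | succ n ih => exact Set.mem_biUnion ih (Set.mem_insert _ _)

lemma ballT_trans {ℓ m : ℕ} {x z y : List Bool} (hz : z ∈ ballT ℓ x)
    (hy : y ∈ ballT m z) : y ∈ ballT (ℓ + m) x := by
  induction m generalizing y with
  | zero => simp only [ballT, Set.mem_singleton_iff] at hy; subst hy; simpa using hz
  | succ n ih =>
    simp only [ballT, Set.mem_iUnion] at hy
    obtain ⟨w, hw, hyw⟩ := hy
    exact Set.mem_biUnion (ih hw) hyw

lemma ballT_mono {ℓ ℓ' : ℕ} (h : ℓ ≤ ℓ') (x : List Bool) :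
    ballT ℓ x ⊆ ballT ℓ' x := by
  intro y hy
  obtain ⟨k, rfl⟩ := Nat.exists_eq_add_of_le h
  exact ballT_trans hy (mem_ballT_self k y)

lemma move_one_left (u : List Bool) : ∀ (s w : List Bool) (a : Bool),
    s ++ a :: (u ++ w) ∈ ballT u.length (s ++ u ++ a :: w) := by
  induction u with
  | nil => intro s w a; simpa using mem_ballT_self 0 (s ++ a :: w)
  | cons c u' ih =>
    intro s w a
    have h1 := ih (s ++ [c]) w a
    have h2 : s ++ a :: c :: (u' ++ w) ∈ oneT ((s ++ [c]) ++ a :: (u' ++ w)) := by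
      refine Or.inr ⟨s, u' ++ w, c, a, ?_, rfl⟩
      simp
    have h2' : s ++ a :: c :: (u' ++ w) ∈ ballT 1 ((s ++ [c]) ++ a :: (u' ++ w)) :=
      Set.mem_biUnion (mem_ballT_self 0 _) h2
    have h3 := ballT_trans h1 h2'
    have e1 : (s ++ [c]) ++ u' ++ a :: w = s ++ (c :: u') ++ a :: w := by simp
    have e2 : s ++ a :: c :: (u' ++ w) = s ++ a :: ((c :: u') ++ w) := by simp
    rw [e1, e2] at h3
    exact ballT_mono (by simp) _ h3

lemma blockswap (v : List Bool) : ∀ (u s w : List Bool),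
    s ++ v ++ u ++ w ∈ ballT (u.length * v.length) (s ++ u ++ v ++ w) := by
  induction v with
  | nil => intro u s w; simpa using mem_ballT_self 0 (s ++ u ++ w)
  | cons a v' ih =>
    intro u s w
    have h1 : s ++ a :: (u ++ (v' ++ w)) ∈ ballT u.length (s ++ u ++ a :: (v' ++ w)) :=
      move_one_left u s (v' ++ w) a
    have h2 := ih u (s ++ [a]) w
    have e1 : s ++ a :: (u ++ (v' ++ w)) = (s ++ [a]) ++ u ++ v' ++ w := by simp
    rw [e1] at h1
    have h3 := ballT_trans h1 h2
    have e2 : (s ++ [a]) ++ v' ++ u ++ w = s ++ (a :: v') ++ u ++ w := by simp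
    have e3 : s ++ u ++ a :: (v' ++ w) = s ++ u ++ (a :: v') ++ w := by simp
    rw [e2, e3] at h3
    exact ballT_mono (by simp [Nat.mul_succ]; omega) _ h3

lemma mem_delBlock_append (t : ℕ) (A d B : List Bool) (hd : d.length = t) :
    A ++ B ∈ delBlock t (A ++ d ++ B) := by
  refine ⟨A.length, ?_, ?_⟩
  · simp [hd]
  · rw [List.append_assoc]
    rw [List.take_left]
    congr 1
    have : A.length + t = (A ++ d).length := by simp [hd]
    rw [← List.append_assoc, this, List.drop_left]

theorem blockTD_subset_trans_then_del (b : ℕ) (x : List Bool) :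
    (⋃ t ≤ b, ((⋃ z ∈ delBlock t x, btBall t z) ∪ ⋃ z ∈ btBall t x, delBlock t z))
      ⊆ ⋃ t ≤ b, ⋃ z ∈ ballT (2 * b ^ 2) x, delBlock t z := by
  intro y hy
  simp only [Set.mem_iUnion, Set.mem_union] at hy ⊢
  obtain ⟨t, ht, hcase⟩ := hy
  have htt : t * t ≤ 2 * b ^ 2 := by nlinarith
  rcases hcase with ⟨z, hz, hyz⟩ | ⟨z, hz, hyz⟩
  · -- delete then block-transpose
    obtain ⟨k, hk, hzx⟩ := hz
    rcases hyz with rfl | ⟨s, u, v, w, hzs, hu, hv, hys⟩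
    · -- y = z : no transposition needed
      exact ⟨t, ht, x, mem_ballT_self _ _, k, hk, hzx⟩
    -- decompose x = p ++ d ++ q
    set p := x.take k with hp
    set q := x.drop (k + t) with hq
    set d := (x.drop k).take t with hdd
    have hd : d.length = t := by
      simp only [hdd, List.length_take, List.length_drop]
      omega
    have hx : x = p ++ d ++ q := by
      rw [List.append_assoc]
      conv_lhs => rw [← List.take_append_drop k x]
      congr 1
      conv_lhs => rw [← List.take_append_drop t (x.drop k)]
      rw [List.drop_drop]
    have hpq : p ++ q = s ++ (u ++ (v ++ w)) := by
      rw [← hzx, hzs]; simp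
    rcases List.append_eq_append_iff.mp hpq with ⟨r, hs, hqr⟩ | ⟨r, hpr, hr⟩
    · -- leaf (a): s = p ++ r, q = r ++ (u ++ v ++ w)
      have hx' : x = (p ++ d ++ r) ++ u ++ v ++ w := by
        rw [hx, hqr]; simp
      have hb := blockswap v u (p ++ d ++ r) w
      rw [← hx'] at hb
      rw [hu, hv] at hb
      refine ⟨t, ht, _, ballT_mono htt x hb, ?_⟩
      have hdel := mem_delBlock_append t p d (r ++ (v ++ (u ++ w))) hd
      have ey : y = p ++ (r ++ (v ++ (u ++ w))) := by rw [hys, hs]; simp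
      have ez : p ++ d ++ r ++ v ++ u ++ w = p ++ d ++ (r ++ (v ++ (u ++ w))) := by simp
      rw [← ey, ← ez] at hdel
      exact hdel
    · -- p = s ++ r, u ++ (v ++ w) = r ++ q
      rcases List.append_eq_append_iff.mp hr with ⟨r', hrr, hvw⟩ | ⟨u2, hu2, hq2⟩
      · -- r = u ++ r', v ++ w = r' ++ q
        rcases List.append_eq_append_iff.mp hvw with ⟨r'', hrr', hw⟩ | ⟨v2, hv2, hq3⟩
        · -- leaf (d): r' = v ++ r'', w = r'' ++ q
          have hx' : x = s ++ u ++ v ++ (r'' ++ d ++ q) := by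
            rw [hx, hpr, hrr, hrr']; simp
          have hb := blockswap v u s (r'' ++ d ++ q)
          rw [← hx', hu, hv] at hb
          refine ⟨t, ht, _, ballT_mono htt x hb, ?_⟩
          have hdel := mem_delBlock_append t (s ++ (v ++ (u ++ r''))) d q hd
          have ey : y = s ++ (v ++ (u ++ r'')) ++ q := by rw [hys, hw]; simp
          have ez : s ++ v ++ u ++ (r'' ++ d ++ q) = s ++ (v ++ (u ++ r'')) ++ d ++ q := by simp
          rw [← ey, ← ez] at hdel
          exact hdel
        · -- leaf (c): v = r' ++ v2, q = v2 ++ w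
          have hx' : x = s ++ u ++ (r' ++ d ++ v2) ++ w := by
            rw [hx, hpr, hrr, hq3]; simp
          have hb := blockswap (r' ++ d ++ v2) u s w
          rw [← hx', hu] at hb
          have hlen : (r' ++ d ++ v2).length ≤ 2 * b := by
            have : r'.length + v2.length = t := by
              rw [← hv, hv2]; simp
            simp only [List.length_append, hd]
            omega
          have hcost : t * (r' ++ d ++ v2).length ≤ 2 * b ^ 2 := by
            calc t * (r' ++ d ++ v2).length ≤ b * (2 * b) := Nat.mul_le_mul ht hlen
            _ ≤ 2 * b ^ 2 := by nlinarith
          refine ⟨t, ht, _, ballT_mono hcost x hb, ?_⟩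
          have hdel := mem_delBlock_append t (s ++ r') d (v2 ++ (u ++ w)) hd
          have ey : y = s ++ r' ++ (v2 ++ (u ++ w)) := by rw [hys, hv2]; simp
          have ez : s ++ (r' ++ d ++ v2) ++ u ++ w = s ++ r' ++ d ++ (v2 ++ (u ++ w)) := by simp
          rw [← ey, ← ez] at hdel
          exact hdel
      · -- leaf (b): u = r ++ u2, q = u2 ++ (v ++ w)
        have hx' : x = s ++ (r ++ d ++ u2) ++ v ++ w := by
          rw [hx, hpr, hq2]; simp
        have hb := blockswap v (r ++ d ++ u2) s w
        rw [← hx', hv] at hb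
        have hlen : (r ++ d ++ u2).length ≤ 2 * b := by
          have : r.length + u2.length = t := by
            rw [← hu, hu2]; simp
          simp only [List.length_append, hd]
          omega
        have hcost : (r ++ d ++ u2).length * t ≤ 2 * b ^ 2 := by
          calc (r ++ d ++ u2).length * t ≤ 2 * b * b := Nat.mul_le_mul hlen ht
          _ ≤ 2 * b ^ 2 := by nlinarith
        refine ⟨t, ht, _, ballT_mono hcost x hb, ?_⟩
        have hdel := mem_delBlock_append t (s ++ (v ++ r)) d (u2 ++ w) hd
        have ey : y = s ++ (v ++ r) ++ (u2 ++ w) := by rw [hys, hu2]; simp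
        have ez : s ++ v ++ (r ++ d ++ u2) ++ w = s ++ (v ++ r) ++ d ++ (u2 ++ w) := by simp
        rw [← ey, ← ez] at hdel
        exact hdel
  · -- block-transpose then delete
    rcases hz with rfl | ⟨s, u, v, w, hzx, hu, hv, hzs⟩
    · exact ⟨t, ht, z, mem_ballT_self _ _, hyz⟩
    · have hb := blockswap v u s w
      rw [← hzx, ← hzs, hu, hv] at hb
      exact ⟨t, ht, z, ballT_mono htt x hb, hyz⟩
end
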